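/- arXiv:1511.03975 — 3 statements merged into one kernel-verified Lean document; each statement's English description precedes it below -/
import Mathlib

section
/- Conversely to the previous fact, in the polynomial jet algebra: if f is a polynomial in x, u_0, ..., u_n with δf/δu = 0, then there exists a polynomial local function g with f = D_x(g) + c(x) for some function c(x) of x alone (equivalently, f minus its part depending on x alone is a total x-derivative). -/
noncomputable section

open MvPolynomial

/-- The total `x`-derivative on the polynomial jet algebra `ℝ[x, u₀, u₁, ...]`,
where variable `0` represents `x` and variable `j+1` represents the jet variable
`u_j`; it is determined by `D_x(x) = 1` and `D_x(u_j) = u_{j+1}`. -/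
def DxX : Derivation ℝ (MvPolynomial ℕ ℝ) (MvPolynomial ℕ ℝ) :=
  MvPolynomial.mkDerivation ℝ fun i => if i = 0 then 1 else X (i + 1)

/-! Grade the jet algebra by the degree in the jet variables (weight `0` on `x`, `1` on each
`u_j`); `D_x` preserves this grading. Integrating by parts, `u_j · ∂f/∂u_j` agrees with
`(-1)^j u₀ · D_x^j (∂f/∂u_j)` modulo the image of `D_x`, so when the Euler operator kills `f`,
the number operator `N f = ∑ u_j · ∂f/∂u_j` is a total derivative. By Euler's identity `N`
multiplies the component of degree `d` by `d`, hence every component of positive degree is a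
total derivative and only the degree-`0` part, a polynomial in `x` alone, remains. -/

namespace MvPolynomial

variable {R σ : Type*}

section Weighted

variable [CommSemiring R] {M : Type*}

theorem IsWeightedHomogeneous.mkDerivation [AddCancelCommMonoid M] {w : σ → M}
    {f : σ → MvPolynomial σ R} (hf : ∀ i, (f i).IsWeightedHomogeneous w (w i))
    {φ : MvPolynomial σ R} {n : M} (hφ : φ.IsWeightedHomogeneous w n) :
    (mkDerivation R f φ).IsWeightedHomogeneous w n := by
  induction hφ using IsWeightedHomogeneous.induction_on with
  | zero => rw [map_zero]; exact isWeightedHomogeneous_zero R w n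
  | add p q _ _ hp hq => rw [map_add]; exact hp.add hq
  | monomial d r hd =>
    rw [mkDerivation_monomial, ← mem_weightedHomogeneousSubmodule]
    refine Submodule.smul_mem _ r (IsWeightedHomogeneous.sum _ _ _ fun i hi => ?_)
    simp only [smul_eq_mul]
    rw [← hd, ← Finsupp.weight_sub_single_add (Finsupp.mem_support_iff.mp hi)]
    exact (isWeightedHomogeneous_monomial _ _ _ rfl).mul (hf i)

theorem weightedHomogeneousComponent_map [AddCommMonoid M] {w : σ → M}
    {T : MvPolynomial σ R →ₗ[R] MvPolynomial σ R}
    (hT : ∀ n φ, φ.IsWeightedHomogeneous w n → (T φ).IsWeightedHomogeneous w n)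
    (n : M) (φ : MvPolynomial σ R) :
    weightedHomogeneousComponent w n (T φ) = T (weightedHomogeneousComponent w n φ) := by
  have hTcomp (m : M) : (T (weightedHomogeneousComponent w m φ)).IsWeightedHomogeneous w m :=
    hT m _ (weightedHomogeneousComponent_isWeightedHomogeneous m φ)
  have hfin := weightedHomogeneousComponent_finsupp (w := w) φ
  conv_lhs => rw [← finsum_weightedHomogeneousComponent w φ, map_finsum T hfin]
  rw [map_finsum _ (hfin.subset fun m hm h => hm (by simp only at h; rw [h, map_zero])),
    finsum_eq_single _ n fun m hm => (hTcomp m).weightedHomogeneousComponent_ne n hm.symm]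
  exact (hTcomp n).weightedHomogeneousComponent_same

theorem IsWeightedHomogeneous.weight_eq_zero_of_mem_vars {w : σ → ℕ} {φ : MvPolynomial σ R}
    (hφ : φ.IsWeightedHomogeneous w 0) {i : σ} (hi : i ∈ φ.vars) : w i = 0 := by
  obtain ⟨d, hd, hid⟩ := (mem_vars_iff_mem_support i).mp hi
  by_contra hw
  have := Finsupp.le_weight w hw d
  rw [hφ (mem_support_iff.mp hd)] at this
  exact Finsupp.mem_support_iff.mp hid (Nat.le_zero.mp this)

theorem coeff_X_mul_pderiv (i : σ) (φ : MvPolynomial σ R) (m : σ →₀ ℕ) :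
    coeff m (X i * pderiv i φ) = m i • coeff m φ := by
  classical
  rw [coeff_X_mul']
  split_ifs with hi
  · have hmi : (m - Finsupp.single i 1 : σ →₀ ℕ) i + 1 = m i := by
      have := Finsupp.mem_support_iff.mp hi
      rw [Finsupp.tsub_apply, Finsupp.single_eq_same]
      omega
    rw [coeff_pderiv, ← Nat.cast_add_one, hmi, Finsupp.sub_add_single_one_cancel
      (Finsupp.mem_support_iff.mp hi), nsmul_eq_mul, mul_comm]
  · rw [Finsupp.notMem_support_iff.mp hi, zero_smul]

theorem coeff_sum_weight_smul_X_mul_pderiv {w : σ → ℕ} {S : Finset σ} {φ : MvPolynomial σ R}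
    (hS : φ.vars ⊆ S) (m : σ →₀ ℕ) :
    coeff m (∑ i ∈ S, w i • (X i * pderiv i φ)) = Finsupp.weight w m • coeff m φ := by
  simp only [coeff_sum, coeff_smul, coeff_X_mul_pderiv, smul_smul, ← Finset.sum_smul]
  by_cases hm : coeff m φ = 0
  · simp [hm]
  have hsupp : m.support ⊆ S := fun i hi =>
    hS ((mem_vars_iff_mem_support i).mpr ⟨m, mem_support_iff.mpr hm, hi⟩)
  rw [Finsupp.weight_apply, Finsupp.sum, Finset.sum_subset hsupp fun i _ hi => by
    rw [Finsupp.notMem_support_iff.mp hi, zero_smul]]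
  exact congrArg (· • coeff m φ) (Finset.sum_congr rfl fun i _ => mul_comm _ _)

theorem weightedHomogeneousComponent_sum_weight_smul_X_mul_pderiv {w : σ → ℕ} {S : Finset σ}
    {φ : MvPolynomial σ R} (hS : φ.vars ⊆ S) (n : ℕ) :
    weightedHomogeneousComponent w n (∑ i ∈ S, w i • (X i * pderiv i φ)) =
      n • weightedHomogeneousComponent w n φ := by
  classical
  ext m
  simp only [coeff_weightedHomogeneousComponent, coeff_smul,
    coeff_sum_weight_smul_X_mul_pderiv hS]
  split_ifs with h
  · rw [h]
  · rw [smul_zero]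

end Weighted

theorem sub_weightedHomogeneousComponent_zero_mem_range [Field R] [CharZero R] {w : σ → ℕ}
    {D : MvPolynomial σ R →ₗ[R] MvPolynomial σ R}
    (hD : ∀ n φ, φ.IsWeightedHomogeneous w n → (D φ).IsWeightedHomogeneous w n)
    {S : Finset σ} {φ : MvPolynomial σ R} (hS : φ.vars ⊆ S)
    (hφ : ∑ i ∈ S, w i • (X i * pderiv i φ) ∈ LinearMap.range D) :
    φ - weightedHomogeneousComponent w 0 φ ∈ LinearMap.range D := by
  obtain ⟨ψ, hψ⟩ := hφ
  have hcomp : ∀ n : ℕ, weightedHomogeneousComponent w (n + 1) φ ∈ LinearMap.range D := by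
    intro n
    refine ⟨((n + 1 : ℕ) : R)⁻¹ • weightedHomogeneousComponent w (n + 1) ψ, ?_⟩
    rw [map_smul, ← weightedHomogeneousComponent_map hD, hψ,
      weightedHomogeneousComponent_sum_weight_smul_X_mul_pderiv hS, ← Nat.cast_smul_eq_nsmul R,
      smul_smul, inv_mul_cancel₀ (Nat.cast_ne_zero.mpr n.succ_ne_zero), one_smul]
  have hsum : φ = ∑ n ∈ Finset.range (weightedTotalDegree w φ + 1),
      weightedHomogeneousComponent w n φ := by
    conv_lhs => rw [← finsum_weightedHomogeneousComponent w φ]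
    refine finsum_eq_sum_of_support_subset _ fun n hn => ?_
    by_contra h
    exact hn (weightedHomogeneousComponent_eq_zero n φ (by simpa using h))
  rw [sub_eq_of_eq_add (hsum.trans (Finset.sum_range_succ' _ _))]
  exact Submodule.sum_mem _ fun n _ => hcomp n

end MvPolynomial

namespace Derivation

variable {R A : Type*} [CommRing R] [CommRing A] [Algebra R A] (D : Derivation R A A)

theorem iterate_mul_sub_mem_range (a b : A) (j : ℕ) :
    D^[j] a * b - (-1 : R) ^ j • (a * D^[j] b) ∈ LinearMap.range (D : A →ₗ[R] A) := by
  induction j generalizing b with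
  | zero => simp
  | succ j ih =>
    have hstep : D^[j + 1] a * b - (-1 : R) ^ (j + 1) • (a * D^[j + 1] b) =
        D (D^[j] a * b) - (D^[j] a * D b - (-1 : R) ^ j • (a * D^[j] (D b))) := by
      rw [Function.iterate_succ_apply', Function.iterate_succ_apply, leibniz, smul_eq_mul,
        smul_eq_mul, pow_succ, mul_neg_one, neg_smul]
      ring
    rw [hstep]
    exact Submodule.sub_mem _ (LinearMap.mem_range_self _ _) (ih (D b))

theorem sum_iterate_mul_sub_mem_range (a : A) (P : ℕ → A) (m : ℕ) :
    ∑ i ∈ Finset.range m, D^[i] a * P i -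
        a * ∑ i ∈ Finset.range m, (-1 : R) ^ i • D^[i] (P i) ∈
      LinearMap.range (D : A →ₗ[R] A) := by
  simp only [Finset.mul_sum, mul_smul_comm, ← Finset.sum_sub_distrib]
  exact Submodule.sum_mem _ fun i _ => D.iterate_mul_sub_mem_range a (P i) i

end Derivation

def jetWeight (i : ℕ) : ℕ := if i = 0 then 0 else 1

theorem DxX_X_succ (j : ℕ) : DxX (X (j + 1)) = X (j + 2) := by
  simp [DxX]

theorem DxX_iterate_X_one (j : ℕ) : DxX^[j] (X 1) = X (j + 1) := by
  induction j with
  | zero => rfl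
  | succ j ih => rw [Function.iterate_succ_apply', ih, DxX_X_succ]

theorem isWeightedHomogeneous_DxX {φ : MvPolynomial ℕ ℝ} {n : ℕ}
    (hφ : φ.IsWeightedHomogeneous jetWeight n) : (DxX φ).IsWeightedHomogeneous jetWeight n := by
  refine hφ.mkDerivation fun i => ?_
  by_cases hi : i = 0
  · simpa [hi, jetWeight] using isWeightedHomogeneous_one ℝ jetWeight
  · simpa [hi, jetWeight] using isWeightedHomogeneous_X ℝ jetWeight (i + 1)

theorem sum_jetWeight_smul_X_mul_pderiv_mem_range (n : ℕ) (f : MvPolynomial ℕ ℝ)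
    (heuler : ∑ i ∈ Finset.range (n + 1),
      ((-1 : ℝ) ^ i) • (fun p => DxX p)^[i] (pderiv (i + 1) f) = 0) :
    ∑ i ∈ Finset.range (n + 2), jetWeight i • (X i * pderiv i f) ∈
      LinearMap.range (DxX : MvPolynomial ℕ ℝ →ₗ[ℝ] MvPolynomial ℕ ℝ) := by
  have h := DxX.sum_iterate_mul_sub_mem_range (X 1) (fun i => pderiv (i + 1) f) (n + 1)
  rw [heuler, mul_zero, sub_zero] at h
  simpa [Finset.sum_range_succ' _ (n + 1), jetWeight, DxX_iterate_X_one] using h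

/-- exactness of the variational complex for polynomials in `x` and
`u₀, ..., u_n`: if `δf/δu = 0` then `f = D_x(g) + c(x)` for a polynomial local
function `g` and a function `c` of `x` alone. -/
theorem euler_kernel_exactness_with_x (n : ℕ) (f : MvPolynomial ℕ ℝ)
    (hvars : ∀ i ∈ f.vars, i ≤ n + 1)
    (heuler : ∑ i ∈ Finset.range (n + 1),
      ((-1 : ℝ) ^ i) • (fun p => DxX p)^[i] (pderiv (i + 1) f) = 0) :
    ∃ g c : MvPolynomial ℕ ℝ, (∀ i ∈ c.vars, i = 0) ∧ f = DxX g + c := by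
  have hS : f.vars ⊆ Finset.range (n + 2) := fun i hi =>
    Finset.mem_range.mpr (Nat.lt_succ_of_le (hvars i hi))
  obtain ⟨g, hg⟩ := sub_weightedHomogeneousComponent_zero_mem_range
    (fun _ _ => isWeightedHomogeneous_DxX) hS
    (sum_jetWeight_smul_X_mul_pderiv_mem_range n f heuler)
  refine ⟨g, weightedHomogeneousComponent jetWeight 0 f, fun i hi => ?_, ?_⟩
  · have := (weightedHomogeneousComponent_isWeightedHomogeneous 0 f).weight_eq_zero_of_mem_vars hi
    simpa [jetWeight] using this
  · exact eq_add_of_sub_eq hg.symm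
end
end

section
/- The constant function γ = 1 is a cosymmetry of the KRRI equation: D_t(1) = −ℓ_F†(1) holds, where ℓ_F† = Σ_i (−D_x)^i ∘ (∂F/∂u_i) is the formal adjoint of the linearization of the KRRI right-hand side F. Equivalently, Σ_i (−D_x)^i (∂F/∂u_i) = 0 identically. -/
open Finset

noncomputable section

/-- Local functions of time `t`, space `x` and the jet variables `u 0 = u, u 1 = u_x, ...`. -/
abbrev LF : Type := ℝ → ℝ → (ℕ → ℝ) → ℝ

/-- Partial derivative of a local function with respect to the jet variable `u j`. -/
def pd (j : ℕ) (f : LF) : LF :=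
  fun t x u => deriv (fun s => f t x (Function.update u j s)) (u j)

/-- Total `x`-derivative `D_x = ∂/∂x + Σ_{j<N} u_{j+1} ∂/∂u_j` (truncated at level `N`). -/
def Dx (N : ℕ) (f : LF) : LF :=
  fun t x u => deriv (fun y => f t y u) x +
    ∑ j ∈ Finset.range N, u (j + 1) * pd j f t x u

/-- Total `t`-derivative `D_t = ∂/∂t + Σ_{j<m} D_x^j(F) ∂/∂u_j` for `u_t = F`. -/
def Dt (N m : ℕ) (F f : LF) : LF :=
  fun t x u => deriv (fun s => f s x u) t +
    ∑ j ∈ Finset.range m, (Dx N)^[j] F t x u * pd j f t x u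

/-- The linearization (Fréchet derivative) `ℓ_F = Σ_{i<m} (∂F/∂u_i) D_x^i` applied to `G`. -/
def lin (N m : ℕ) (F G : LF) : LF :=
  fun t x u => ∑ i ∈ Finset.range m, pd i F t x u * (Dx N)^[i] G t x u

/-- The Euler operator (variational derivative) `δ/δu = Σ_{i<m} (-D_x)^i ∘ ∂/∂u_i`. -/
def Euler (N m : ℕ) (f : LF) : LF :=
  fun t x u => ∑ i ∈ Finset.range m, (-1 : ℝ) ^ i * (Dx N)^[i] (pd i f) t x u

/-- `f` is a smooth local function of order at most `n`: it depends smoothly on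
`t`, `x` and the jet variables `u 0, ..., u n` only. -/
def IsLocal (n : ℕ) (f : LF) : Prop :=
  ∃ g : ℝ × ℝ × (Fin (n + 1) → ℝ) → ℝ, ContDiff ℝ (⊤ : ℕ∞) g ∧
    ∀ t x u, f t x u = g (t, x, fun i => u i)

/-- The right-hand side `F` of the KRRI equation. -/
def KRRI (a b d : ℝ) (h : ℝ → ℝ) : LF := fun _ x u =>
  -u 1 - (3/2) * a * u 0 * u 1 - (1/6) * b * u 3 + (3/8) * a^2 * (u 0)^2 * u 1
    - (23/24) * a * b * u 1 * u 2 - (5/12) * a * b * u 0 * u 3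
    + (d/2) * (deriv h x * u 0 + h x * u 1)
    + (1/4) * b * d * (-((deriv^[3] h) x) * u 0 - (deriv^[2] h) x * u 1
        + deriv h x * u 2 + h x * u 3)
    - (19/360) * b^2 * u 5

/-! ### Auxiliary lemmas -/

private lemma deriv_affine' {f : ℝ → ℝ} {B : ℝ} (hf : ∀ s, f s = B * s + f 0) (x : ℝ) :
    deriv f x = B := by
  have hB : HasDerivAt f B x := by
    have h1 : HasDerivAt (fun s => B * s + f 0) B x := by
      simpa using ((hasDerivAt_id x).const_mul B).add_const (f 0)
    exact h1.congr_of_eventuallyEq (Filter.Eventually.of_forall fun s => hf s)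
  exact hB.deriv

private lemma deriv_quad' {f : ℝ → ℝ} {A B : ℝ} (hf : ∀ s, f s = A * s^2 + B * s + f 0)
    (x : ℝ) : deriv f x = 2 * A * x + B := by
  have h1 : HasDerivAt (fun s : ℝ => A * s^2 + B * s + f 0) (2 * A * x + B) x := by
    have hp : HasDerivAt (fun s : ℝ => s^2) (2*x) x := by simpa using hasDerivAt_pow 2 x
    have := ((hp.const_mul A).add ((hasDerivAt_id x).const_mul B)).add_const (f 0)
    exact this.congr_deriv (by ring)
  exact (h1.congr_of_eventuallyEq (Filter.Eventually.of_forall fun s => hf s)).deriv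

private lemma pd_eq_affine {f : LF} {t x : ℝ} {u : ℕ → ℝ} {j : ℕ} {B : ℝ}
    (hf : ∀ s, f t x (Function.update u j s) = B * s + f t x (Function.update u j 0)) :
    pd j f t x u = B :=
  deriv_affine' (f := fun s => f t x (Function.update u j s)) hf (u j)

private lemma pd_eq_quad {f : LF} {t x : ℝ} {u : ℕ → ℝ} {j : ℕ} {A B : ℝ}
    (hf : ∀ s, f t x (Function.update u j s)
      = A * s^2 + B * s + f t x (Function.update u j 0)) :
    pd j f t x u = 2 * A * (u j) + B :=
  deriv_quad' (f := fun s => f t x (Function.update u j s)) hf (u j)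

private lemma hasDerivAt_iterate {h : ℝ → ℝ} (hh : ContDiff ℝ (⊤ : ℕ∞) h) (m : ℕ) (x : ℝ) :
    HasDerivAt (deriv^[m] h) (deriv^[m+1] h x) x := by
  have h2 : DifferentiableAt ℝ (deriv^[m] h) x :=
    (((hh.of_le (by simp) : ContDiff ℝ (⊤ : ℕ∞) h).iterate_deriv m).differentiable
      (by simp)).differentiableAt
  simpa [Function.iterate_succ_apply'] using h2.hasDerivAt

/-- canonical "constant + e·u_k + c·h^{(m)}(x)" local function -/
private def Sfun (h : ℝ → ℝ) (c0 e c : ℝ) (k m : ℕ) : LF :=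
  fun _ x u => c0 + e * u k + c * deriv^[m] h x

private lemma Dx_Sfun {h : ℝ → ℝ} (hh : ContDiff ℝ (⊤ : ℕ∞) h) {N : ℕ} {c0 e c : ℝ} {k m : ℕ}
    (hk : k < N) : Dx N (Sfun h c0 e c k m) = Sfun h 0 e c (k+1) (m+1) := by
  funext t x u
  have hx : deriv (fun y => Sfun h c0 e c k m t y u) x = c * deriv^[m+1] h x := by
    have h1 := ((hasDerivAt_iterate hh m x).const_mul c).const_add (c0 + e * u k)
    exact h1.deriv
  have hkk : pd k (Sfun h c0 e c k m) t x u = e := by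
    refine pd_eq_affine ?_
    intro s
    simp only [Sfun, Function.update_self]
    ring
  have hne : ∀ b, b ≠ k → pd b (Sfun h c0 e c k m) t x u = 0 := by
    intro b hb
    refine pd_eq_affine (B := 0) ?_
    intro s
    simp only [Sfun, Function.update_of_ne (Ne.symm hb)]
    ring
  have hsum : ∑ j ∈ Finset.range N, u (j+1) * pd j (Sfun h c0 e c k m) t x u = u (k+1) * e := by
    rw [Finset.sum_eq_single_of_mem k (Finset.mem_range.2 hk)
      (fun b _ hb => by rw [hne b hb, mul_zero])]
    rw [hkk]
  simp only [Dx]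
  rw [hx, hsum]
  simp only [Sfun]
  ring

/-- coefficient of the linearization of KRRI in `u_x` direction -/
private def P1f (a b d : ℝ) (h : ℝ → ℝ) : LF := fun _ x u =>
  -1 - (3/2)*a*u 0 + (3/8)*a^2*(u 0)^2 - (23/24)*a*b*u 2 + (d/2) * h x
    - (1/4)*b*d * deriv^[2] h x

/-- `γ = 1` is a cosymmetry of the KRRI equation, i.e.
`Σ_{i=0}^{5} (−D_x)^i (∂F/∂u_i) = 0` identically (so `D_t(1) = 0 = −ℓ_F†(1)`). -/
theorem one_is_cosymmetry_of_krri (a b d : ℝ) (h : ℝ → ℝ) (hh : ContDiff ℝ (⊤ : ℕ∞) h)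
    (N : ℕ) (hN : 10 ≤ N) :
    ∀ t x u, ∑ i ∈ Finset.range 6,
      (-1 : ℝ) ^ i * (Dx N)^[i] (pd i (KRRI a b d h)) t x u = 0 := by
  intro t x u
  -- the six partial derivatives of F
  have e0 : pd 0 (KRRI a b d h) t x u
      = 2 * ((3/8)*a^2*u 1) * u 0 + (-(3/2)*a*u 1 - (5/12)*a*b*u 3
        + (d/2) * deriv^[1] h x - (1/4)*b*d * deriv^[3] h x) := by
    refine pd_eq_quad ?_
    intro s
    simp [KRRI, Function.update_apply, Function.iterate_one]
    ring
  have hP1 : pd 1 (KRRI a b d h) = P1f a b d h := by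
    funext t x u
    refine pd_eq_affine ?_
    intro s
    simp [KRRI, P1f, Function.update_apply, Function.iterate_one]
    ring
  have hP2 : pd 2 (KRRI a b d h) = Sfun h 0 (-((23/24)*a*b)) ((1/4)*b*d) 1 1 := by
    funext t x u
    refine pd_eq_affine ?_
    intro s
    simp [KRRI, Sfun, Function.update_apply, Function.iterate_one]
    ring
  have hP3 : pd 3 (KRRI a b d h) = Sfun h (-((1/6)*b)) (-((5/12)*a*b)) ((1/4)*b*d) 0 0 := by
    funext t x u
    refine pd_eq_affine ?_
    intro s
    simp [KRRI, Sfun, Function.update_apply, Function.iterate_one]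
    ring
  have hP4 : pd 4 (KRRI a b d h) = Sfun h 0 0 0 0 0 := by
    funext t x u
    refine pd_eq_affine ?_
    intro s
    simp [KRRI, Sfun, Function.update_apply, Function.iterate_one]
  have hP5 : pd 5 (KRRI a b d h) = Sfun h (-((19/360)*b^2)) 0 0 0 0 := by
    funext t x u
    refine pd_eq_affine ?_
    intro s
    simp [KRRI, Sfun, Function.update_apply, Function.iterate_one]
    ring
  -- value of Dx applied to pd 1 F
  have T1 : Dx N (pd 1 (KRRI a b d h)) t x u
      = (d/2) * deriv^[1] h x - (1/4)*b*d * deriv^[3] h x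
        + u 1 * (2 * ((3/8)*a^2) * u 0 + (-(3/2)*a)) + u 3 * (-((23/24)*a*b)) := by
    rw [hP1]
    simp only [Dx]
    have hx : deriv (fun y => P1f a b d h t y u) x
        = (d/2) * deriv^[1] h x - (1/4)*b*d * deriv^[3] h x := by
      have h0 : HasDerivAt h (deriv^[1] h x) x := by
        simpa using hasDerivAt_iterate hh 0 x
      have h2 := hasDerivAt_iterate hh 2 x
      exact (((h0.const_mul (d/2)).const_add
        (-1 - (3/2)*a*u 0 + (3/8)*a^2*(u 0)^2 - (23/24)*a*b*u 2)).sub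
        (h2.const_mul ((1/4)*b*d))).deriv
    have p0 : pd 0 (P1f a b d h) t x u = 2 * ((3/8)*a^2) * u 0 + (-(3/2)*a) := by
      refine pd_eq_quad ?_
      intro s
      simp [P1f, Function.update_apply]
      ring
    have p2 : pd 2 (P1f a b d h) t x u = -((23/24)*a*b) := by
      refine pd_eq_affine ?_
      intro s
      simp [P1f, Function.update_apply]
      ring
    have hz : ∀ j ∈ Finset.range N, j ∉ ({0, 2} : Finset ℕ) →
        u (j+1) * pd j (P1f a b d h) t x u = 0 := by
      intro j _ hj
      simp only [Finset.mem_insert, Finset.mem_singleton, not_or] at hj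
      obtain ⟨hj0, hj2⟩ := hj
      have : pd j (P1f a b d h) t x u = 0 := by
        refine pd_eq_affine (B := 0) ?_
        intro s
        simp [P1f, Function.update_of_ne (Ne.symm hj0), Function.update_of_ne (Ne.symm hj2)]
      rw [this, mul_zero]
    have hsub : ({0, 2} : Finset ℕ) ⊆ Finset.range N := by
      intro j hj
      simp only [Finset.mem_insert, Finset.mem_singleton] at hj
      rcases hj with rfl | rfl <;> exact Finset.mem_range.2 (by omega)
    have hs : ∑ j ∈ Finset.range N, u (j+1) * pd j (P1f a b d h) t x u
        = ∑ j ∈ ({0, 2} : Finset ℕ), u (j+1) * pd j (P1f a b d h) t x u :=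
      (Finset.sum_subset hsub hz).symm
    rw [hx, hs, Finset.sum_pair (by norm_num : (0:ℕ) ≠ 2), p0, p2]
    ring
  have T2 : (Dx N)^[2] (pd 2 (KRRI a b d h)) t x u
      = Sfun h 0 (-((23/24)*a*b)) ((1/4)*b*d) 3 3 t x u := by
    rw [hP2,
      show (Dx N)^[2] (Sfun h 0 (-((23/24)*a*b)) ((1/4)*b*d) 1 1)
        = Dx N (Dx N (Sfun h 0 (-((23/24)*a*b)) ((1/4)*b*d) 1 1)) from rfl,
      Dx_Sfun (k := 1) hh (by omega), Dx_Sfun (k := 2) hh (by omega)]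
  have T3 : (Dx N)^[3] (pd 3 (KRRI a b d h)) t x u
      = Sfun h 0 (-((5/12)*a*b)) ((1/4)*b*d) 3 3 t x u := by
    rw [hP3,
      show (Dx N)^[3] (Sfun h (-((1/6)*b)) (-((5/12)*a*b)) ((1/4)*b*d) 0 0)
        = Dx N (Dx N (Dx N (Sfun h (-((1/6)*b)) (-((5/12)*a*b)) ((1/4)*b*d) 0 0))) from rfl,
      Dx_Sfun (k := 0) hh (by omega), Dx_Sfun (k := 1) hh (by omega),
      Dx_Sfun (k := 2) hh (by omega)]
  have T4 : (Dx N)^[4] (pd 4 (KRRI a b d h)) t x u = Sfun h 0 0 0 4 4 t x u := by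
    rw [hP4,
      show (Dx N)^[4] (Sfun h 0 0 0 0 0)
        = Dx N (Dx N (Dx N (Dx N (Sfun h 0 0 0 0 0)))) from rfl,
      Dx_Sfun (k := 0) hh (by omega), Dx_Sfun (k := 1) hh (by omega),
      Dx_Sfun (k := 2) hh (by omega), Dx_Sfun (k := 3) hh (by omega)]
  have T5 : (Dx N)^[5] (pd 5 (KRRI a b d h)) t x u = Sfun h 0 0 0 5 5 t x u := by
    rw [hP5,
      show (Dx N)^[5] (Sfun h (-((19/360)*b^2)) 0 0 0 0)
        = Dx N (Dx N (Dx N (Dx N (Dx N (Sfun h (-((19/360)*b^2)) 0 0 0 0))))) from rfl,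
      Dx_Sfun (k := 0) hh (by omega), Dx_Sfun (k := 1) hh (by omega),
      Dx_Sfun (k := 2) hh (by omega), Dx_Sfun (k := 3) hh (by omega),
      Dx_Sfun (k := 4) hh (by omega)]
  simp only [Finset.sum_range_succ, Finset.sum_range_zero, Function.iterate_zero,
    Function.iterate_one, id_eq]
  rw [e0, T1, T2, T3, T4, T5]
  simp only [Sfun]
  ring
end
end

section
/- For the KRRI equation with h ≡ const and h d = 4, the characteristic G = 5t F + (x + 2t) u_x + 2u − 4/a satisfies the linearized symmetry equation D_t(G) = ℓ_F(G), where F is the right-hand side of the KRRI equation with constant h; i.e., the equation admits the additional point symmetry 5t ∂_t + (x+2t) ∂_x + (4/a − 2u) ∂_u. -/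
open Finset

noncomputable section

/-- The right-hand side of the KRRI equation with constant depth `h`. -/
def KRRIconst (a b d h : ℝ) : LF := fun _ _ u =>
  -u 1 - (3/2) * a * u 0 * u 1 - (1/6) * b * u 3 + (3/8) * a^2 * (u 0)^2 * u 1
    - (23/24) * a * b * u 1 * u 2 - (5/12) * a * b * u 0 * u 3
    + (d/2) * h * u 1 + (1/4) * b * d * h * u 3 - (19/360) * b^2 * u 5

/-- t,x-independent local function of the first `m` jet variables. -/
def Loc (m : ℕ) (f : LF) : Prop :=
  ∃ g : (Fin m → ℝ) → ℝ, ContDiff ℝ (⊤ : ℕ∞) g ∧ ∀ t x u, f t x u = g (fun i => u i)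

lemma hasDerivAt_update' (u : ℕ → ℝ) {j m : ℕ} (hj : j < m) (s : ℝ) :
    HasDerivAt (fun s : ℝ => (fun i : Fin m => Function.update u j s i))
      (Pi.single (⟨j, hj⟩ : Fin m) 1) s := by
  have key : (fun s : ℝ => (fun i : Fin m => Function.update u j s i))
      = fun s => (fun i : Fin m => u i) + (s - u j) • (Pi.single (⟨j, hj⟩ : Fin m) (1:ℝ) : Fin m → ℝ) := by
    funext s i
    rcases eq_or_ne (i : ℕ) j with hij | hij
    · have hi : i = ⟨j, hj⟩ := Fin.ext hij
      subst hi
      simp [Function.update_self]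
    · have : i ≠ ⟨j, hj⟩ := by simpa [Fin.ext_iff] using hij
      simp [Function.update_of_ne hij, this]
  rw [key]
  simpa using (((hasDerivAt_id s).sub_const (u j)).smul_const
    (Pi.single (⟨j, hj⟩ : Fin m) (1:ℝ))).const_add (fun i : Fin m => u i)

lemma Loc.xt {m : ℕ} {f : LF} (hf : Loc m f) (t t' x x' : ℝ) (u : ℕ → ℝ) :
    f t x u = f t' x' u := by
  obtain ⟨g, -, hfg⟩ := hf
  rw [hfg, hfg]

lemma Loc.diffAt {m : ℕ} {f : LF} (hf : Loc m f) (t x : ℝ) (u : ℕ → ℝ) (j : ℕ) (y : ℝ) :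
    DifferentiableAt ℝ (fun s => f t x (Function.update u j s)) y := by
  obtain ⟨g, hg, hfg⟩ := hf
  have hrw : (fun s => f t x (Function.update u j s))
      = fun s => g (fun i : Fin m => Function.update u j s i) := by
    funext s; rw [hfg]
  rw [hrw]
  rcases Nat.lt_or_ge j m with hj | hj
  · exact ((hg.differentiable (by simp) _).hasFDerivAt.comp_hasDerivAt y
      (hasDerivAt_update' u hj y)).differentiableAt
  · have : (fun s => g (fun i : Fin m => Function.update u j s i))
        = fun _ => g (fun i : Fin m => u i) := by
      funext s
      congr 1
      funext i
      exact Function.update_of_ne (by omega) _ _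
    rw [this]
    exact differentiableAt_const _

lemma pd_rep {m : ℕ} {f : LF} (g : (Fin m → ℝ) → ℝ) (hg : ContDiff ℝ (⊤ : ℕ∞) g)
    (hfg : ∀ t x u, f t x u = g (fun i => u i)) (j : ℕ) (t x : ℝ) (u : ℕ → ℝ) :
    pd j f t x u = if hj : j < m then
      fderiv ℝ g (fun i => u i) (Pi.single (⟨j, hj⟩ : Fin m) 1) else 0 := by
  have hrw : (fun s => f t x (Function.update u j s))
      = fun s => g (fun i : Fin m => Function.update u j s i) := by
    funext s; rw [hfg]
  unfold pd
  rw [hrw]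
  rcases Nat.lt_or_ge j m with hj | hj
  · rw [dif_pos hj]
    have hd : HasDerivAt (fun s => g fun i : Fin m => Function.update u j s i)
        ((fderiv ℝ g fun i : Fin m => Function.update u j (u j) i) (Pi.single ⟨j, hj⟩ 1)) (u j) :=
      ((hg.differentiable (by simp) _).hasFDerivAt.comp_hasDerivAt (u j)
      (hasDerivAt_update' u hj (u j)))
    have hpt : (fun i : Fin m => Function.update u j (u j) i) = fun i : Fin m => u i := by
      funext i; rw [Function.update_eq_self]
    rw [hd.deriv, hpt]
  · rw [dif_neg (by omega)]
    have : (fun s => g (fun i : Fin m => Function.update u j s i))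
        = fun _ => g (fun i : Fin m => u i) := by
      funext s; congr 1; funext i
      exact Function.update_of_ne (by omega) _ _
    rw [this, deriv_const]

lemma Loc.pd_zero {m : ℕ} {f : LF} (hf : Loc m f) {j : ℕ} (hj : m ≤ j)
    (t x : ℝ) (u : ℕ → ℝ) : pd j f t x u = 0 := by
  obtain ⟨g, hg, hfg⟩ := hf
  rw [pd_rep g hg hfg, dif_neg (by omega)]

lemma contDiff_fderiv_single {m : ℕ} {g : (Fin m → ℝ) → ℝ} (hg : ContDiff ℝ (⊤ : ℕ∞) g)
    (w : Fin m → ℝ) : ContDiff ℝ (⊤ : ℕ∞) (fun v : Fin m → ℝ => fderiv ℝ g v w) :=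
  (ContinuousLinearMap.apply ℝ ℝ w).contDiff.comp (hg.fderiv_right (by simp))

lemma Loc.pd {m : ℕ} {f : LF} (hf : Loc m f) (j : ℕ) : Loc m (pd j f) := by
  obtain ⟨g, hg, hfg⟩ := hf
  refine ⟨fun v => if hj : j < m then fderiv ℝ g v (Pi.single (⟨j, hj⟩ : Fin m) 1) else 0,
    ?_, ?_⟩
  · rcases Nat.lt_or_ge j m with hj | hj
    · simp only [dif_pos hj]
      exact contDiff_fderiv_single hg _
    · simp only [dif_neg (by omega : ¬ j < m)]
      exact contDiff_const
  · intro t x u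
    exact pd_rep g hg hfg j t x u

lemma Loc.dx {m : ℕ} {f : LF} (hf : Loc m f) {N : ℕ} (hmN : m ≤ N) :
    Loc (m + 1) (Dx N f) := by
  obtain ⟨g, hg, hfg⟩ := hf
  refine ⟨fun v : Fin (m+1) → ℝ => ∑ j : Fin m,
      v j.succ * fderiv ℝ g (fun i : Fin m => v i.castSucc) (Pi.single j 1), ?_, ?_⟩
  · apply ContDiff.sum
    intro j _
    have h1 : ContDiff ℝ (⊤ : ℕ∞) (fun v : Fin (m+1) → ℝ => v j.succ) :=
      (ContinuousLinearMap.proj j.succ : ((Fin (m+1)) → ℝ) →L[ℝ] ℝ).contDiff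
    have hres : ContDiff ℝ (⊤ : ℕ∞) (fun v : Fin (m+1) → ℝ => fun i : Fin m => v i.castSucc) :=
      (ContinuousLinearMap.pi (fun i : Fin m =>
        (ContinuousLinearMap.proj i.castSucc : ((Fin (m+1)) → ℝ) →L[ℝ] ℝ))).contDiff
    exact h1.mul ((contDiff_fderiv_single hg _).comp hres)
  · intro t x u
    have hx : (fun y => f t y u) = fun _ => g (fun i => u i) := by
      funext y; rw [hfg]
    have hsum : ∀ j ∈ Finset.range N, u (j+1) * _root_.pd j f t x u =
        (if hj : j < m then u (j+1) * fderiv ℝ g (fun i : Fin m => u i)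
          (Pi.single (⟨j, hj⟩ : Fin m) 1) else 0) := by
      intro j _
      rw [pd_rep g hg hfg]
      split <;> simp
    rw [Dx, hx, deriv_const, Finset.sum_congr rfl hsum, zero_add]
    rw [← Finset.sum_subset (Finset.range_subset_range.mpr hmN)
      (fun j _ hj => dif_neg (by simpa using hj))]
    rw [← Fin.sum_univ_eq_sum_range (fun j => if hj : j < m then
      u (j+1) * fderiv ℝ g (fun i : Fin m => u i) (Pi.single (⟨j, hj⟩ : Fin m) 1) else 0) m]
    apply Finset.sum_congr rfl
    intro i _
    rw [dif_pos i.isLt]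
    rfl


lemma loc_KRRIconst (a b d h : ℝ) : Loc 6 (KRRIconst a b d h) := by
  refine ⟨fun v : Fin 6 → ℝ =>
    -v 1 - (3/2) * a * v 0 * v 1 - (1/6) * b * v 3 + (3/8) * a^2 * (v 0)^2 * v 1
    - (23/24) * a * b * v 1 * v 2 - (5/12) * a * b * v 0 * v 3
    + (d/2) * h * v 1 + (1/4) * b * d * h * v 3 - (19/360) * b^2 * v 5, ?_, ?_⟩
  · have hp : ∀ i : Fin 6, ContDiff ℝ (⊤ : ℕ∞) (fun v : Fin 6 → ℝ => v i) := fun i =>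
      (ContinuousLinearMap.proj i : ((Fin 6) → ℝ) →L[ℝ] ℝ).contDiff
    fun_prop
  · intro t x u
    rfl

lemma deriv_quad (c0 c1 c2 y : ℝ) :
    deriv (fun s : ℝ => c0 + c1 * s + c2 * s^2) y = c1 + 2 * c2 * y := by
  have h : HasDerivAt (fun s : ℝ => c0 + c1 * s + c2 * s^2) (c1 + 2 * c2 * y) y := by
    have h1 : HasDerivAt (fun s : ℝ => c1 * s) c1 y := by
      simpa using (hasDerivAt_id y).const_mul c1
    have h2 : HasDerivAt (fun s : ℝ => c2 * s^2) (2 * c2 * y) y := by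
      have := (hasDerivAt_pow 2 y).const_mul c2
      simpa [mul_comm, mul_assoc, mul_left_comm] using this
    exact (h1.const_add c0).add h2
  exact h.deriv

/-- The shape of `Dx^[i] G`. -/
def Hf (E : LF) (c : ℝ) (k : ℕ) (e : ℝ) : LF :=
  fun t x u => 5 * t * E t x u + (x + 2 * t) * u (k + 1) + c * u k - e

lemma pd_Hf {m : ℕ} {E : LF} (hE : Loc m E) (c : ℝ) (k : ℕ) (e : ℝ)
    (j : ℕ) (t x : ℝ) (u : ℕ → ℝ) :
    pd j (Hf E c k e) t x u = 5 * t * pd j E t x u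
      + (x + 2 * t) * (if j = k + 1 then 1 else 0)
      + c * (if j = k then 1 else 0) := by
  have hder : ∀ i : ℕ, HasDerivAt (fun s => Function.update u j s i)
      (if j = i then 1 else 0) (u j) := by
    intro i
    rcases eq_or_ne j i with hji | hji
    · subst hji
      simp only [Function.update_self, if_pos rfl]
      exact hasDerivAt_id _
    · have : (fun s => Function.update u j s i) = fun _ => u i := by
        funext s; exact Function.update_of_ne (Ne.symm hji) _ _
      rw [this, if_neg hji]
      exact hasDerivAt_const _ _
  have hE' : HasDerivAt (fun s => E t x (Function.update u j s)) (pd j E t x u) (u j) :=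
    (hE.diffAt t x u j (u j)).hasDerivAt
  have h : HasDerivAt (fun s => Hf E c k e t x (Function.update u j s))
      (5 * t * pd j E t x u + (x + 2 * t) * (if j = k + 1 then 1 else 0)
        + c * (if j = k then 1 else 0)) (u j) := by
    exact (((hE'.const_mul (5 * t)).add ((hder (k+1)).const_mul (x + 2 * t))).add
      ((hder k).const_mul c)).sub_const e
  exact h.deriv

lemma dx_Hf {m : ℕ} {E : LF} (hE : Loc m E) {N : ℕ} (c : ℝ) {k : ℕ} (hk : k + 1 < N) (e : ℝ) :
    Dx N (Hf E c k e) = Hf (Dx N E) (c + 1) (k + 1) 0 := by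
  funext t x u
  have hxE : (fun y => E t y u) = fun _ => E t x u := funext fun y => hE.xt t t y x u
  have hDxE : Dx N E t x u = ∑ j ∈ Finset.range N, u (j + 1) * pd j E t x u := by
    rw [Dx, hxE, deriv_const, zero_add]
  have hxpart : deriv (fun y => Hf E c k e t y u) x = u (k + 1) := by
    have : (fun y => Hf E c k e t y u)
        = fun y => (5 * t * E t x u - e + c * u k + 2 * t * u (k+1)) + u (k+1) * y + 0 * y^2 := by
      funext y
      show 5 * t * E t y u + (y + 2 * t) * u (k + 1) + c * u k - e = _
      rw [hE.xt t t y x u]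
      ring
    rw [this, deriv_quad]
    ring
  have hsum : ∀ j ∈ Finset.range N, u (j + 1) * pd j (Hf E c k e) t x u
      = u (j + 1) * (5 * t * pd j E t x u)
        + (if j = k + 1 then (x + 2 * t) * u (j + 1) else 0)
        + (if j = k then c * u (j + 1) else 0) := by
    intro j _
    rw [pd_Hf hE]
    split <;> split <;> ring
  rw [Dx, hxpart, Finset.sum_congr rfl hsum]
  rw [Finset.sum_add_distrib, Finset.sum_add_distrib, Finset.sum_ite_eq' (Finset.range N),
    Finset.sum_ite_eq' (Finset.range N), if_pos (Finset.mem_range.mpr hk),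
    if_pos (Finset.mem_range.mpr (by omega : k < N))]
  have h5 : ∑ j ∈ Finset.range N, u (j + 1) * (5 * t * pd j E t x u)
      = 5 * t * ∑ j ∈ Finset.range N, u (j + 1) * pd j E t x u := by
    rw [Finset.mul_sum]
    exact Finset.sum_congr rfl fun j _ => by ring
  rw [h5, ← hDxE]
  show _ = 5 * t * Dx N E t x u + (x + 2 * t) * u (k + 1 + 1) + (c + 1) * u (k + 1) - 0
  ring

section pdF
variable (a b d h t x : ℝ) (u : ℕ → ℝ)

lemma pdF0 : pd 0 (KRRIconst a b d h) t x u
    = -(3/2)*a*u 1 - (5/12)*a*b*u 3 + 2*((3/8)*a^2*u 1)*u 0 := by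
  unfold pd
  have hrw : (fun s => KRRIconst a b d h t x (Function.update u 0 s)) =
      fun s => (-u 1 - (1/6)*b*u 3 - (23/24)*a*b*u 1*u 2 + (d/2)*h*u 1
          + (1/4)*b*d*h*u 3 - (19/360)*b^2*u 5)
        + (-(3/2)*a*u 1 - (5/12)*a*b*u 3)*s + ((3/8)*a^2*u 1)*s^2 := by
    funext s
    simp only [KRRIconst, Function.update_apply]
    norm_num
    all_goals ring
  rw [hrw, deriv_quad]
  all_goals ring

lemma pdF1 : pd 1 (KRRIconst a b d h) t x u
    = -1 - (3/2)*a*u 0 + (3/8)*a^2*(u 0)^2 - (23/24)*a*b*u 2 + (d/2)*h := by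
  unfold pd
  have hrw : (fun s => KRRIconst a b d h t x (Function.update u 1 s)) =
      fun s => (-(1/6)*b*u 3 - (5/12)*a*b*u 0*u 3 + (1/4)*b*d*h*u 3 - (19/360)*b^2*u 5)
        + (-1 - (3/2)*a*u 0 + (3/8)*a^2*(u 0)^2 - (23/24)*a*b*u 2 + (d/2)*h)*s
        + 0*s^2 := by
    funext s
    simp only [KRRIconst, Function.update_apply]
    norm_num
    all_goals ring
  rw [hrw, deriv_quad]
  all_goals ring

lemma pdF2 : pd 2 (KRRIconst a b d h) t x u = -(23/24)*a*b*u 1 := by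
  unfold pd
  have hrw : (fun s => KRRIconst a b d h t x (Function.update u 2 s)) =
      fun s => (-u 1 - (3/2)*a*u 0*u 1 - (1/6)*b*u 3 + (3/8)*a^2*(u 0)^2*u 1
          - (5/12)*a*b*u 0*u 3 + (d/2)*h*u 1 + (1/4)*b*d*h*u 3 - (19/360)*b^2*u 5)
        + (-(23/24)*a*b*u 1)*s + 0*s^2 := by
    funext s
    simp only [KRRIconst, Function.update_apply]
    norm_num
    all_goals ring
  rw [hrw, deriv_quad]
  all_goals ring

lemma pdF3 : pd 3 (KRRIconst a b d h) t x u = -(1/6)*b - (5/12)*a*b*u 0 + (1/4)*b*d*h := by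
  unfold pd
  have hrw : (fun s => KRRIconst a b d h t x (Function.update u 3 s)) =
      fun s => (-u 1 - (3/2)*a*u 0*u 1 + (3/8)*a^2*(u 0)^2*u 1
          - (23/24)*a*b*u 1*u 2 + (d/2)*h*u 1 - (19/360)*b^2*u 5)
        + (-(1/6)*b - (5/12)*a*b*u 0 + (1/4)*b*d*h)*s + 0*s^2 := by
    funext s
    simp only [KRRIconst, Function.update_apply]
    norm_num
    all_goals ring
  rw [hrw, deriv_quad]
  all_goals ring

lemma pdF4 : pd 4 (KRRIconst a b d h) t x u = 0 := by
  unfold pd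
  have hrw : (fun s => KRRIconst a b d h t x (Function.update u 4 s)) =
      fun _ => KRRIconst a b d h t x u := by
    funext s
    simp only [KRRIconst, Function.update_apply]
    norm_num
  rw [hrw, deriv_const]

lemma pdF5 : pd 5 (KRRIconst a b d h) t x u = -(19/360)*b^2 := by
  unfold pd
  have hrw : (fun s => KRRIconst a b d h t x (Function.update u 5 s)) =
      fun s => (-u 1 - (3/2)*a*u 0*u 1 - (1/6)*b*u 3 + (3/8)*a^2*(u 0)^2*u 1
          - (23/24)*a*b*u 1*u 2 - (5/12)*a*b*u 0*u 3 + (d/2)*h*u 1 + (1/4)*b*d*h*u 3)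
        + (-(19/360)*b^2)*s + 0*s^2 := by
    funext s
    simp only [KRRIconst, Function.update_apply]
    norm_num
    all_goals ring
  rw [hrw, deriv_quad]
  all_goals ring

end pdF


/-- for the KRRI equation with `h ≡ const` and `h d = 4`, the
characteristic `G = 5tF + (x+2t)u_x + 2u − 4/a` satisfies `D_t(G) = ℓ_F(G)`,
i.e. the equation admits the extra point symmetry
`5t ∂_t + (x+2t) ∂_x + (4/a − 2u) ∂_u`. -/
theorem extra_scaling_symmetry_of_krri (a b d h : ℝ) (ha : a ≠ 0) (hhd : h * d = 4)
    (N : ℕ) (hN : 12 ≤ N) :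
    let F := KRRIconst a b d h
    let G : LF := fun t x u => 5 * t * F t x u + (x + 2 * t) * u 1 + 2 * u 0 - 4 / a
    ∀ t x u, Dt N 6 F G t x u = lin N 6 F G t x u := by
  intro F G t x u
  have hh : h ≠ 0 := fun h0 => by simp [h0] at hhd
  have hd4 : d = 4 / h := by rw [eq_div_iff hh]; linarith [hhd]
  have L0 := loc_KRRIconst a b d h
  have L1 := L0.dx (N := N) (by omega)
  have L2 := L1.dx (N := N) (by omega)
  have L3 := L2.dx (N := N) (by omega)
  have L4 := L3.dx (N := N) (by omega)
  show Dt N 6 (KRRIconst a b d h) (Hf (KRRIconst a b d h) 2 0 (4/a)) t x u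
      = lin N 6 (KRRIconst a b d h) (Hf (KRRIconst a b d h) 2 0 (4/a)) t x u
  -- iterates of Dx on G
  have d1 : Dx N (Hf (KRRIconst a b d h) 2 0 (4/a))
      = Hf (Dx N (KRRIconst a b d h)) 3 1 0 := by
    rw [dx_Hf L0 2 (by omega) (4/a)]; norm_num
  have d2 : Dx N (Hf (Dx N (KRRIconst a b d h)) 3 1 0)
      = Hf (Dx N (Dx N (KRRIconst a b d h))) 4 2 0 := by
    rw [dx_Hf L1 3 (by omega) 0]; norm_num
  have d3 : Dx N (Hf (Dx N (Dx N (KRRIconst a b d h))) 4 2 0)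
      = Hf (Dx N (Dx N (Dx N (KRRIconst a b d h)))) 5 3 0 := by
    rw [dx_Hf L2 4 (by omega) 0]; norm_num
  have d4 : Dx N (Hf (Dx N (Dx N (Dx N (KRRIconst a b d h)))) 5 3 0)
      = Hf (Dx N (Dx N (Dx N (Dx N (KRRIconst a b d h))))) 6 4 0 := by
    rw [dx_Hf L3 5 (by omega) 0]; norm_num
  have d5 : Dx N (Hf (Dx N (Dx N (Dx N (Dx N (KRRIconst a b d h))))) 6 4 0)
      = Hf (Dx N (Dx N (Dx N (Dx N (Dx N (KRRIconst a b d h)))))) 7 5 0 := by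
    rw [dx_Hf L4 6 (by omega) 0]; norm_num
  -- time derivative of G
  have hdt : deriv (fun s => Hf (KRRIconst a b d h) 2 0 (4/a) s x u) t
      = 5 * (KRRIconst a b d h t x u) + 2 * u 1 := by
    have hfun : (fun s => Hf (KRRIconst a b d h) 2 0 (4/a) s x u)
        = fun s => (2*u 0 - 4/a + x*u 1)
            + (5*(KRRIconst a b d h t x u) + 2*u 1)*s + 0*s^2 := by
      funext s
      show 5*s*(KRRIconst a b d h t x u) + (x+2*s)*u 1 + 2*u 0 - 4/a = _
      ring
    rw [hfun, deriv_quad]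
    ring
  -- expansion of Dx F
  have hE1 : Dx N (KRRIconst a b d h) t x u
      = ∑ j ∈ Finset.range 6, u (j+1) * pd j (KRRIconst a b d h) t x u := by
    rw [Dx]
    have hc : (fun y => KRRIconst a b d h t y u) = fun _ => KRRIconst a b d h t x u := rfl
    rw [hc, deriv_const, zero_add]
    exact (Finset.sum_subset (Finset.range_subset_range.mpr (by omega : 6 ≤ N))
      (fun j _ hj => by
        rw [L0.pd_zero (by simpa using hj) t x u, mul_zero])).symm
  simp only [Dt, lin, hdt]
  simp only [Finset.sum_range_succ, Finset.sum_range_zero]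
  norm_num [pd_Hf L0]
  rw [d1, d2, d3, d4, d5]
  simp only [Hf]
  rw [hE1]
  simp only [Finset.sum_range_succ, Finset.sum_range_zero]
  rw [pdF0, pdF1, pdF2, pdF3, pdF4, pdF5]
  simp only [KRRIconst]
  linear_combination (2*u 1 + (1/2)*b*u 3) * hhd
    + (-6*u 1 + 3*a*u 0*u 1 - (5/3)*b*u 3) * (mul_inv_cancel₀ ha)
end
end
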